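/- arXiv:2204.06090 — 3 statements merged into one kernel-verified Lean document; each statement's English description precedes it below -/
import Mathlib

section
/- For d = 2, the quasicode A* with A*_i = C(n,i) for even i and A*_i = 0 for odd i is the unique optimum of the (n,2) Delsarte linear program, with optimal value 2^{n−1}. -/
open Finset

/-- Integer binomial coefficient with convention C(a,b)=0 unless 0 ≤ b ≤ a. -/
def intChoose (a b : ℤ) : ℤ :=
  if 0 ≤ a ∧ 0 ≤ b then (a.toNat.choose b.toNat : ℤ) else 0

/-- Krawtchouk polynomial K_j(i;n) = Σ_{k=0}^{j} (-1)^k C(i,k) C(n-i,j-k),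
with the convention K_j(i;n)=0 if j ∉ [0,n] or i ∉ [0,n]. -/
def kraw (n : ℕ) (j i : ℤ) : ℤ :=
  ∑ k ∈ Finset.range (j.toNat + 1),
    (-1) ^ k * intChoose i k * intChoose ((n : ℤ) - i) (j - k)

/-- Feasibility for the (n,d) Delsarte linear program: A_0 = 1, A_i = 0 for
1 ≤ i ≤ d-1, A_i ≥ 0 for i ≤ n, and the Delsarte inequalities
Σ_{i=0}^{n} A_i K_j(i;n) ≥ 0 for all 1 ≤ j ≤ n. -/
def delsarteFeasible (n d : ℕ) (A : ℕ → ℚ) : Prop :=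
  A 0 = 1 ∧ (∀ i : ℕ, 1 ≤ i → i ≤ d - 1 → A i = 0) ∧
    (∀ i : ℕ, i ≤ n → 0 ≤ A i) ∧
    ∀ j : ℕ, 1 ≤ j → j ≤ n →
      0 ≤ ∑ i ∈ Finset.range (n + 1), A i * (kraw n j i : ℚ)

/-!
Write `K_j(i)` for the coefficient of `z^j` in `(1 - z)^i (1 + z)^(n - i)`. Homogenizing gives
`∑_j K_j(i) a^j b^(n-j) = (b - a)^i (b + a)^(n - i)`, which yields both `K² = 2^n` and
`∑_j (n - j) K_j(i) = 2^(n-1) (n [i = 0] + [i = 1])`. So the MacWilliams transform `B = K A` of a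
feasible `A` satisfies `n B_0 + ∑_{0<j<n} (n - j) B_j = n 2^(n-1)` with every `B_j ≥ 0`, whence
`∑ A_i = B_0 ≤ 2^(n-1)`, with equality only if `B_j = 0` for `0 < j < n`. In that case
`2^n A = K B` only involves `B_0` and `B_n`, and `A_1 = 0` forces `B_n = 2^(n-1)`, which leaves
the weight distribution of the even-weight code.
-/

open Polynomial

theorem Polynomial.coeff_one_sub_X_pow (R : Type*) [CommRing R] (n k : ℕ) :
    ((1 - X : R[X]) ^ n).coeff k = (-1) ^ k * n.choose k := by
  have h : (1 - X : R[X]) ^ n = ((1 + X) ^ n).comp (C (-1) * X) := by simp [sub_eq_add_neg]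
  rw [h, comp_C_mul_X_coeff, coeff_one_add_X_pow, mul_comm]

theorem Polynomial.homogenize_pow {R : Type*} [CommSemiring R] {p : R[X]} {m : ℕ}
    (hp : p.natDegree ≤ m) (k : ℕ) : (p ^ k).homogenize (m * k) = p.homogenize m ^ k := by
  simpa [mul_comm] using
    homogenize_finsetProd (s := range k) (p := fun _ => p) (n := fun _ => m) (by simp [hp])

noncomputable def krawtchouk (n j i : ℕ) : ℤ :=
  ((1 - X) ^ i * (1 + X) ^ (n - i) : ℤ[X]).coeff j

theorem kraw_natCast {n i : ℕ} (j : ℕ) (hi : i ≤ n) : kraw n j i = krawtchouk n j i := by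
  rw [krawtchouk, coeff_mul, Nat.sum_antidiagonal_eq_sum_range_succ_mk, kraw, Int.toNat_natCast]
  refine sum_congr rfl fun k hk ↦ ?_
  have hkj : k ≤ j := mem_range_succ_iff.mp hk
  rw [coeff_one_sub_X_pow, coeff_one_add_X_pow, ← Nat.cast_sub hi, ← Nat.cast_sub hkj]
  simp [intChoose, mul_assoc]

theorem krawtchouk_zero (n i : ℕ) : krawtchouk n 0 i = 1 := by
  simp [krawtchouk, coeff_zero_eq_eval_zero]

theorem krawtchouk_at_zero (n j : ℕ) : krawtchouk n j 0 = n.choose j := by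
  simp [krawtchouk, coeff_one_add_X_pow]

theorem krawtchouk_at_self (n j : ℕ) : krawtchouk n j n = (-1) ^ j * n.choose j := by
  simp [krawtchouk, coeff_one_sub_X_pow]

theorem sum_krawtchouk_mul_pow_mul_pow {R : Type*} [CommRing R] (a b : R) {n i : ℕ}
    (hi : i ≤ n) :
    ∑ j ∈ range (n + 1), (krawtchouk n j i : R) * a ^ j * b ^ (n - j)
      = (b - a) ^ i * (b + a) ^ (n - i) := by
  have hsub : ((1 - X : ℤ[X])).homogenize 1 = .X 1 - .X 0 := by simp
  have hadd : ((1 + X : ℤ[X])).homogenize 1 = .X 1 + .X 0 := by simp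
  have hhom : ((1 - X) ^ i * (1 + X) ^ (n - i) : ℤ[X]).homogenize n
      = (.X 1 - .X 0) ^ i * (.X 1 + .X 0) ^ (n - i) := by
    have h := homogenize_mul ((1 - X : ℤ[X]) ^ i) ((1 + X) ^ (n - i))
      (m := 1 * i) (n := 1 * (n - i)) (by compute_degree!) (by compute_degree!)
    rwa [← mul_add, one_mul, Nat.add_sub_cancel' hi, homogenize_pow (by compute_degree!),
      homogenize_pow (by compute_degree!), hsub, hadd] at h
  have := congrArg (MvPolynomial.aeval ![a, b]) hhom
  simpa [homogenize, Nat.sum_antidiagonal_eq_sum_range_succ_mk, MvPolynomial.aeval_monomial,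
    krawtchouk, mul_assoc] using this

theorem sum_krawtchouk_mul_krawtchouk {n i : ℕ} (hi : i ≤ n) (m : ℕ) :
    ∑ j ∈ range (n + 1), krawtchouk n m j * krawtchouk n j i = if m = i then 2 ^ n else 0 := by
  have h := congrArg (coeff · m) (sum_krawtchouk_mul_pow_mul_pow (1 - X : ℤ[X]) (1 + X) hi)
  have hrhs : (1 + X - (1 - X) : ℤ[X]) ^ i * (1 + X + (1 - X)) ^ (n - i) = C (2 ^ n) * X ^ i := by
    rw [← Nat.add_sub_cancel' hi, pow_add, map_mul, Nat.add_sub_cancel_left]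
    simp only [map_pow, C_ofNat]
    ring
  simp only [hrhs, coeff_C_mul_X_pow, finsetSum_coeff] at h
  rw [← h]
  refine sum_congr rfl fun j _ ↦ ?_
  rw [mul_assoc, ← C_eq_intCast, coeff_C_mul, krawtchouk, mul_comm, Int.cast_id]

theorem sum_sub_mul_krawtchouk {n i : ℕ} (hi : i ≤ n) :
    ∑ j ∈ range (n + 1), ((n : ℤ) - j) * krawtchouk n j i
      = 2 ^ (n - 1) * if i = 0 then (n : ℤ) else if i = 1 then 1 else 0 := by
  have h := congrArg (coeff · 1) (sum_krawtchouk_mul_pow_mul_pow (1 : ℤ[X]) (1 + X) hi)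
  have hlhs : ∀ j ∈ range (n + 1),
      ((krawtchouk n j i : ℤ[X]) * 1 ^ j * (1 + X) ^ (n - j)).coeff 1
        = ((n : ℤ) - j) * krawtchouk n j i := by
    intro j hj
    rw [one_pow, mul_one, ← C_eq_intCast, coeff_C_mul, coeff_one_add_X_pow, Nat.choose_one_right,
      Nat.cast_sub (mem_range_succ_iff.mp hj), mul_comm, Int.cast_id]
  have hrhs : (1 + X - 1 : ℤ[X]) ^ i * (1 + X + 1) ^ (n - i) = X ^ i * (X + C 2) ^ (n - i) := by
    rw [C_ofNat]; ring
  simp only [finsetSum_coeff, sum_congr rfl hlhs, hrhs] at h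
  rw [h]
  rcases i with _ | _ | i
  · rw [pow_zero, one_mul, Nat.sub_zero, coeff_X_add_C_pow]
    simp [mul_comm]
  · rw [zero_add, pow_one, ← zero_add 1, coeff_X_mul, coeff_X_add_C_pow]
    simp
  · simp [coeff_X_pow_mul']

-- `|C|` times the dual distribution of a code `C` with distance distribution `A`.
noncomputable def macWilliams (n : ℕ) (A : ℕ → ℚ) (j : ℕ) : ℚ :=
  ∑ i ∈ range (n + 1), A i * krawtchouk n j i

section MacWilliams

variable {n : ℕ} {A : ℕ → ℚ}

theorem sum_mul_kraw_eq_macWilliams (A : ℕ → ℚ) (j : ℕ) :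
    ∑ i ∈ range (n + 1), A i * (kraw n j i : ℚ) = macWilliams n A j :=
  sum_congr rfl fun i hi ↦ by rw [kraw_natCast j (mem_range_succ_iff.mp hi)]

theorem macWilliams_zero_right : macWilliams n A 0 = ∑ i ∈ range (n + 1), A i := by
  simp [macWilliams, krawtchouk_zero]

theorem sum_mul_macWilliams (c : ℕ → ℚ) :
    ∑ j ∈ range (n + 1), c j * macWilliams n A j
      = ∑ i ∈ range (n + 1), A i * ∑ j ∈ range (n + 1), c j * krawtchouk n j i := by
  simp_rw [macWilliams, mul_sum]
  rw [sum_comm]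
  exact sum_congr rfl fun _ _ ↦ sum_congr rfl fun _ _ ↦ by ring

theorem macWilliams_macWilliams {m : ℕ} (hm : m ≤ n) :
    macWilliams n (macWilliams n A) m = 2 ^ n * A m := by
  calc macWilliams n (macWilliams n A) m
      = ∑ i ∈ range (n + 1),
          A i * ∑ j ∈ range (n + 1), (krawtchouk n m j : ℚ) * krawtchouk n j i := by
        rw [macWilliams, ← sum_mul_macWilliams]
        exact sum_congr rfl fun _ _ ↦ mul_comm _ _
    _ = ∑ i ∈ range (n + 1), A i * if m = i then 2 ^ n else 0 := by
        refine sum_congr rfl fun i hi ↦ ?_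
        have h := congrArg (Int.cast : ℤ → ℚ)
          (sum_krawtchouk_mul_krawtchouk (mem_range_succ_iff.mp hi) m)
        push_cast at h
        rw [h]
    _ = 2 ^ n * A m := by
        simp [Nat.lt_succ_iff.mpr hm, mul_comm]

theorem sum_sub_mul_macWilliams (hn : 1 ≤ n) :
    ∑ j ∈ range (n + 1), ((n : ℚ) - j) * macWilliams n A j
      = 2 ^ (n - 1) * (n * A 0 + A 1) := by
  rw [sum_mul_macWilliams]
  have hweight : ∀ i ∈ range (n + 1),
      A i * ∑ j ∈ range (n + 1), ((n : ℚ) - j) * krawtchouk n j i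
        = A i * 2 ^ (n - 1) * if i = 0 then (n : ℚ) else if i = 1 then 1 else 0 := by
    intro i hi
    have h := congrArg (Int.cast : ℤ → ℚ)
      (sum_sub_mul_krawtchouk (mem_range_succ_iff.mp hi))
    push_cast at h
    rw [h, mul_assoc]
  rw [sum_congr rfl hweight, sum_eq_add 0 1 zero_ne_one (fun i _ hi ↦ by simp [hi.1, hi.2])
    (by simp) (by simp; omega)]
  simp only [if_pos, if_neg one_ne_zero]
  ring

end MacWilliams

def evenWeightDistribution (n i : ℕ) : ℚ := if Even i then (n.choose i : ℚ) else 0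

theorem two_mul_evenWeightDistribution (n i : ℕ) :
    2 * evenWeightDistribution n i = n.choose i * (1 + (-1) ^ i) := by
  rcases Nat.even_or_odd i with hi | hi
  · simp [evenWeightDistribution, hi, hi.neg_one_pow]; ring
  · simp [evenWeightDistribution, Nat.not_even_iff_odd.mpr hi, hi.neg_one_pow]

theorem macWilliams_evenWeightDistribution {n : ℕ} (hn : 1 ≤ n) (j : ℕ) :
    macWilliams n (evenWeightDistribution n) j
      = 2 ^ (n - 1) * ((if j = 0 then 1 else 0) + if j = n then 1 else 0) := by
  have hE : ∀ i, evenWeightDistribution n i = (krawtchouk n i 0 + krawtchouk n i n) / 2 := by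
    intro i
    rw [eq_div_iff two_ne_zero, mul_comm, two_mul_evenWeightDistribution, krawtchouk_at_zero,
      krawtchouk_at_self]
    push_cast
    ring
  have horth := fun l (hl : l ≤ n) ↦
    congrArg (Int.cast : ℤ → ℚ) (sum_krawtchouk_mul_krawtchouk hl j)
  push_cast at horth
  simp_rw [macWilliams, hE, add_div, add_mul, sum_add_distrib, div_mul_eq_mul_div, ← sum_div]
  simp_rw [mul_comm (krawtchouk n _ _ : ℚ) (krawtchouk n j _ : ℚ), horth 0 (Nat.zero_le n),
    horth n le_rfl]
  rw [← pow_sub_one_mul (by omega : n ≠ 0)]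
  split_ifs <;> ring

namespace delsarteFeasible

variable {n : ℕ} {A : ℕ → ℚ}

theorem macWilliams_nonneg {d : ℕ} (hA : delsarteFeasible n d A) {j : ℕ} (hj : 1 ≤ j)
    (hjn : j ≤ n) : 0 ≤ macWilliams n A j :=
  sum_mul_kraw_eq_macWilliams A j ▸ hA.2.2.2 j hj hjn

theorem mul_sum_add_sum_sub_mul_macWilliams_succ (hn : 1 ≤ n) (hA : delsarteFeasible n 2 A) :
    n * ∑ i ∈ range (n + 1), A i
      + ∑ j ∈ range n, ((n : ℚ) - (j + 1)) * macWilliams n A (j + 1)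
      = n * 2 ^ (n - 1) := by
  have h := sum_sub_mul_macWilliams (A := A) hn
  rw [sum_range_succ', hA.1, hA.2.1 1 le_rfl le_rfl, macWilliams_zero_right] at h
  push_cast at h
  linear_combination h

theorem sub_mul_macWilliams_succ_nonneg (hA : delsarteFeasible n 2 A) {j : ℕ}
    (hj : j ∈ range n) :
    0 ≤ ((n : ℚ) - (j + 1)) * macWilliams n A (j + 1) := by
  have hjn : j + 1 ≤ n := mem_range.mp hj
  exact mul_nonneg (sub_nonneg.mpr (by exact_mod_cast hjn))
    (hA.macWilliams_nonneg le_add_self hjn)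

theorem sum_le (hn : 1 ≤ n) (hA : delsarteFeasible n 2 A) :
    ∑ i ∈ range (n + 1), A i ≤ 2 ^ (n - 1) := by
  have htail := sum_nonneg fun j (hj : j ∈ range n) ↦ hA.sub_mul_macWilliams_succ_nonneg hj
  refine le_of_mul_le_mul_left ?_ (by exact_mod_cast hn : (0 : ℚ) < n)
  linarith [hA.mul_sum_add_sum_sub_mul_macWilliams_succ hn]

theorem macWilliams_eq_zero_of_sum_eq (hn : 1 ≤ n) (hA : delsarteFeasible n 2 A)
    (hsum : ∑ i ∈ range (n + 1), A i = 2 ^ (n - 1)) {j : ℕ} (hj : 1 ≤ j) (hjn : j < n) :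
    macWilliams n A j = 0 := by
  have htail : ∑ j ∈ range n, ((n : ℚ) - (j + 1)) * macWilliams n A (j + 1) = 0 := by
    linear_combination hA.mul_sum_add_sum_sub_mul_macWilliams_succ hn - n * hsum
  obtain ⟨k, rfl⟩ := Nat.exists_eq_add_of_le' hj
  have h := (sum_eq_zero_iff_of_nonneg fun _ hj ↦ hA.sub_mul_macWilliams_succ_nonneg hj).mp
    htail k (mem_range.mpr (by omega))
  have hpos : (0 : ℚ) < n - (k + 1) := sub_pos.mpr (by exact_mod_cast hjn)
  exact (mul_eq_zero.mp h).resolve_left hpos.ne'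

theorem eq_evenWeightDistribution_of_sum_eq (hn : 1 ≤ n) (hA : delsarteFeasible n 2 A)
    (hsum : ∑ i ∈ range (n + 1), A i = 2 ^ (n - 1)) {m : ℕ} (hm : m ≤ n) :
    A m = evenWeightDistribution n m := by
  have hinv : ∀ m ≤ n,
      2 ^ n * A m = n.choose m * (2 ^ (n - 1) + (-1) ^ m * macWilliams n A n) := by
    intro m hm
    rw [← macWilliams_macWilliams hm, macWilliams, sum_eq_add 0 n (by omega),
      macWilliams_zero_right, hsum, krawtchouk_at_zero, krawtchouk_at_self]
    · push_cast; ring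
    · intro j hj hj0
      rw [hA.macWilliams_eq_zero_of_sum_eq hn hsum (by omega) (by have := mem_range.mp hj; omega),
        zero_mul]
    · simp
    · simp
  have hlast : macWilliams n A n = 2 ^ (n - 1) := by
    have h := hinv 1 (by omega)
    rw [hA.2.1 1 le_rfl le_rfl, Nat.choose_one_right] at h
    refine mul_left_cancel₀ (Nat.cast_ne_zero.mpr (by omega) : (n : ℚ) ≠ 0) ?_
    linear_combination h
  have h := hinv m hm
  rw [hlast] at h
  refine mul_left_cancel₀ (pow_ne_zero n two_ne_zero) ?_
  rw [← pow_sub_one_mul (by omega : n ≠ 0)] at h ⊢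
  linear_combination h - 2 ^ (n - 1) * two_mul_evenWeightDistribution n m

end delsarteFeasible

theorem delsarteFeasible_evenWeightDistribution {n : ℕ} (hn : 1 ≤ n) :
    delsarteFeasible n 2 (evenWeightDistribution n) := by
  refine ⟨by simp [evenWeightDistribution], fun i h1 h2 ↦ ?_, fun i _ ↦ ?_,
    fun j hj hjn ↦ ?_⟩
  · obtain rfl : i = 1 := by omega
    simp [evenWeightDistribution]
  · unfold evenWeightDistribution; positivity
  · rw [sum_mul_kraw_eq_macWilliams, macWilliams_evenWeightDistribution hn]
    positivity

theorem sum_evenWeightDistribution {n : ℕ} (hn : 1 ≤ n) :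
    ∑ i ∈ range (n + 1), evenWeightDistribution n i = 2 ^ (n - 1) := by
  rw [← macWilliams_zero_right, macWilliams_evenWeightDistribution hn]
  rw [if_pos rfl, if_neg (by omega)]
  ring

/-- For d = 2: the quasicode A*_i = C(n,i) for even i and 0 for odd i is the unique
optimum of the (n,2) Delsarte LP, with optimal value 2^{n-1}. -/
theorem d_eq_two_unique_optimum (n : ℕ) (hn : 2 ≤ n) :
    IsGreatest {v : ℚ | ∃ A : ℕ → ℚ, delsarteFeasible n 2 A ∧
        v = ∑ i ∈ Finset.range (n + 1), A i} (2 ^ (n - 1)) ∧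
    ∀ A : ℕ → ℚ, delsarteFeasible n 2 A →
      (∑ i ∈ Finset.range (n + 1), A i) = 2 ^ (n - 1) →
      ∀ i : ℕ, i ≤ n → A i = if Even i then (n.choose i : ℚ) else 0 := by
  have hn1 : 1 ≤ n := by omega
  refine ⟨⟨⟨evenWeightDistribution n, delsarteFeasible_evenWeightDistribution hn1,
    (sum_evenWeightDistribution hn1).symm⟩, ?_⟩, ?_⟩
  · rintro v ⟨A, hA, rfl⟩
    exact hA.sum_le hn1
  · intro A hA hsum i hi
    exact hA.eq_evenWeightDistribution_of_sum_eq hn1 hsum hi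
end

section
/- For d = 2 and any n, the vector c with c_j = (n−j)/n for 0 ≤ j ≤ n is feasible for the dual of the (n,2) Delsarte LP: c_j ≥ 0, c_0 = 1, and Σ_{j=0}^{n} c_j K_j(i;n) = 0 for all i ∈ [2,n]; moreover its objective value Σ_{j=0}^{n} c_j C(n,j) equals 2^{n−1}. -/
open Finset

lemma intChoose_natCast (a b : ℕ) : intChoose a b = (a.choose b : ℤ) := by
  simp [intChoose]

lemma intChoose_neg (a b : ℤ) (hb : b < 0) : intChoose a b = 0 := by
  rw [intChoose, if_neg (fun h => absurd h.2 (not_le.mpr hb))]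

lemma sum_mul_choose (N : ℕ) :
    ∑ m ∈ range (N + 1), (m : ℤ) * N.choose m = N * 2 ^ (N - 1) := by
  cases N with
  | zero => simp
  | succ M =>
    rw [Finset.sum_range_succ']
    simp only [Nat.cast_zero, zero_mul, add_zero]
    have h : ∀ k ∈ range (M + 1),
        ((k : ℤ) + 1) * ((M + 1).choose (k + 1) : ℤ) = (M + 1) * (M.choose k : ℤ) := by
      intro k _
      have := Nat.add_one_mul_choose_eq M k
      have : ((M + 1) * M.choose k : ℕ) = ((M + 1).choose (k + 1) * (k + 1) : ℕ) := this
      push_cast at this ⊢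
      linarith [this]
    calc ∑ k ∈ range (M + 1), ((k : ℤ) + 1) * ((M + 1).choose (k + 1) : ℤ)
        = ∑ k ∈ range (M + 1), ((M : ℤ) + 1) * (M.choose k : ℤ) := Finset.sum_congr rfl h
      _ = (M + 1) * 2 ^ M := by
          rw [← Finset.mul_sum]
          congr 1
          exact_mod_cast Nat.sum_range_choose M
      _ = _ := by simp

lemma alt_sum_choose (i : ℕ) (hi : 1 ≤ i) :
    ∑ k ∈ range (i + 1), (-1 : ℤ) ^ k * i.choose k = 0 := by
  rw [Int.alternating_sum_range_choose, if_neg (by omega)]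

lemma alt_sum_mul_choose (i : ℕ) (hi : 2 ≤ i) :
    ∑ k ∈ range (i + 1), (-1 : ℤ) ^ k * k * i.choose k = 0 := by
  obtain ⟨M, rfl⟩ : ∃ M, i = M + 1 := ⟨i - 1, by omega⟩
  rw [Finset.sum_range_succ']
  simp only [Nat.cast_zero, mul_zero, zero_mul, add_zero]
  have h : ∀ k ∈ range (M + 1),
      (-1 : ℤ) ^ (k + 1) * (k + 1) * ((M + 1).choose (k + 1) : ℤ)
        = -((M : ℤ) + 1) * ((-1) ^ k * (M.choose k : ℤ)) := by
    intro k _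
    have := Nat.add_one_mul_choose_eq M k
    have h2 : ((M + 1) * M.choose k : ℕ) = ((M + 1).choose (k + 1) * (k + 1) : ℕ) := this
    have h3 : ((M : ℤ) + 1) * (M.choose k : ℤ) = ((M + 1).choose (k + 1) : ℤ) * (k + 1) := by
      exact_mod_cast h2
    rw [pow_succ, show (-1 : ℤ) ^ k * -1 * ((k : ℤ) + 1) * ((M + 1).choose (k + 1) : ℤ)
      = -((-1 : ℤ) ^ k * (((M + 1).choose (k + 1) : ℤ) * ((k : ℤ) + 1))) by ring, ← h3]
    ring
  have hgoal : ∑ k ∈ range (M + 1), (-1 : ℤ) ^ (k + 1) * ((k + 1 : ℕ) : ℤ) * ((M + 1).choose (k + 1) : ℤ)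
      = ∑ k ∈ range (M + 1), -((M : ℤ) + 1) * ((-1) ^ k * (M.choose k : ℤ)) := by
    refine Finset.sum_congr rfl fun k hk => ?_
    rw [show ((k + 1 : ℕ) : ℤ) = (k : ℤ) + 1 by push_cast; ring]
    exact h k hk
  rw [hgoal, ← Finset.mul_sum, alt_sum_choose M (by omega), mul_zero]

lemma kraw_eq (n i j : ℕ) (hi : i ≤ n) (hj : j ≤ n) :
    kraw n j i = ∑ k ∈ range (n + 1),
      (-1 : ℤ) ^ k * (i.choose k : ℤ) * intChoose ((n : ℤ) - i) ((j : ℤ) - k) := by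
  rw [kraw]
  have htn : ((j : ℤ)).toNat = j := Int.toNat_natCast j
  rw [htn]
  have hsub : range (j + 1) ⊆ range (n + 1) := by
    intro x hx; simp only [mem_range] at *; omega
  have h0 : ∀ x ∈ range (n + 1), x ∉ range (j + 1) →
      (-1 : ℤ) ^ x * intChoose (i : ℤ) x * intChoose ((n : ℤ) - i) ((j : ℤ) - x) = 0 := by
    intro x hx hx'
    simp only [mem_range] at hx hx'
    rw [intChoose_neg ((n : ℤ) - i) _ (by omega), mul_zero]
  rw [Finset.sum_subset hsub h0]
  refine Finset.sum_congr rfl fun k _ => ?_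
  rw [intChoose_natCast]

lemma key (n i : ℕ) (hi2 : 2 ≤ i) (hin : i ≤ n) :
    ∑ j ∈ range (n + 1), ((n : ℤ) - j) * kraw n j i = 0 := by
  have hrw : ∑ j ∈ range (n + 1), ((n : ℤ) - j) * kraw n j i
      = ∑ k ∈ range (n + 1), ∑ j ∈ range (n + 1),
          ((n : ℤ) - j) * ((-1 : ℤ) ^ k * (i.choose k : ℤ) * intChoose ((n : ℤ) - i) ((j : ℤ) - k)) := by
    rw [Finset.sum_comm]
    apply Finset.sum_congr rfl
    intro j hj
    rw [kraw_eq n i j hin (by simp only [mem_range] at hj; omega), Finset.mul_sum]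
  rw [hrw]
  -- restrict outer sum to k ≤ i
  rw [show (n + 1) = (i + 1) + (n - i) by omega] at *
  rw [Finset.sum_range_add]
  have hz : ∑ k ∈ range (n - i), ∑ j ∈ range (i + 1 + (n - i)),
      ((n : ℤ) - j) * ((-1 : ℤ) ^ (i + 1 + k) * (i.choose (i + 1 + k) : ℤ)
        * intChoose ((n : ℤ) - i) ((j : ℤ) - ((i + 1 + k : ℕ) : ℤ))) = 0 := by
    apply Finset.sum_eq_zero
    intro k _
    apply Finset.sum_eq_zero
    intro j _
    rw [Nat.choose_eq_zero_of_lt (by omega)]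
    simp
  rw [hz, add_zero]
  -- now compute inner sum for k ≤ i
  have hinner : ∀ k ∈ range (i + 1), ∑ j ∈ range (i + 1 + (n - i)),
      ((n : ℤ) - j) * ((-1 : ℤ) ^ k * (i.choose k : ℤ) * intChoose ((n : ℤ) - i) ((j : ℤ) - k))
      = ((-1 : ℤ) ^ k * (i.choose k : ℤ)) *
          (((n : ℤ) - k) * 2 ^ (n - i) - ((n : ℤ) - i) * 2 ^ (n - i - 1)) := by
    intro k hk
    simp only [mem_range] at hk
    have hkn : k ≤ n := by omega
    have step1 : ∑ j ∈ range (i + 1 + (n - i)),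
        ((n : ℤ) - j) * ((-1 : ℤ) ^ k * (i.choose k : ℤ) * intChoose ((n : ℤ) - i) ((j : ℤ) - k))
        = ∑ j ∈ Finset.Ico k (n + 1),
        ((n : ℤ) - j) * ((-1 : ℤ) ^ k * (i.choose k : ℤ) * intChoose ((n : ℤ) - i) ((j : ℤ) - k)) := by
      rw [show i + 1 + (n - i) = n + 1 by omega]
      rw [Finset.range_eq_Ico]
      symm
      apply Finset.sum_subset
      · intro x hx; simp only [Finset.mem_Ico] at *; omega
      · intro j hj hj'
        simp only [Finset.mem_Ico] at hj hj'
        rw [intChoose_neg _ _ (by push_cast; omega), mul_zero, mul_zero]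
    rw [step1, Finset.sum_Ico_eq_sum_range]
    rw [show n + 1 - k = (n - i + 1) + (i - k) by omega]
    rw [Finset.sum_range_add]
    have hz2 : ∑ m ∈ range (i - k),
        ((n : ℤ) - ((k + (n - i + 1 + m) : ℕ) : ℤ)) * ((-1 : ℤ) ^ k * (i.choose k : ℤ)
          * intChoose ((n : ℤ) - i) (((k + (n - i + 1 + m) : ℕ) : ℤ) - k)) = 0 := by
      apply Finset.sum_eq_zero
      intro m _
      have : intChoose ((n : ℤ) - i) (((k + (n - i + 1 + m) : ℕ) : ℤ) - k) = 0 := by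
        have hcast : (((k + (n - i + 1 + m) : ℕ) : ℤ) - k) = ((n - i + 1 + m : ℕ) : ℤ) := by
          push_cast; ring
        rw [hcast, show ((n : ℤ) - i) = ((n - i : ℕ) : ℤ) by push_cast [hin]; ring,
          intChoose_natCast, Nat.choose_eq_zero_of_lt (by omega)]
        simp
      rw [this, mul_zero, mul_zero]
    rw [hz2, add_zero]
    have hterm : ∀ m ∈ range (n - i + 1),
        ((n : ℤ) - ((k + m : ℕ) : ℤ)) * ((-1 : ℤ) ^ k * (i.choose k : ℤ)
          * intChoose ((n : ℤ) - i) (((k + m : ℕ) : ℤ) - k))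
        = ((-1 : ℤ) ^ k * (i.choose k : ℤ)) *
            ((((n : ℤ) - k) * ((n - i).choose m : ℤ)) - (m : ℤ) * ((n - i).choose m : ℤ)) := by
      intro m _
      have hcast : (((k + m : ℕ) : ℤ) - k) = ((m : ℕ) : ℤ) := by push_cast; ring
      rw [hcast, show ((n : ℤ) - i) = ((n - i : ℕ) : ℤ) by push_cast [hin]; ring,
        intChoose_natCast]
      push_cast
      ring
    rw [Finset.sum_congr rfl hterm, ← Finset.mul_sum]
    congr 1
    rw [Finset.sum_sub_distrib, ← Finset.mul_sum]
    have h1 : ∑ m ∈ range (n - i + 1), ((n - i).choose m : ℤ) = 2 ^ (n - i) := by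
      have := Nat.sum_range_choose (n - i)
      exact_mod_cast this
    have h2 := sum_mul_choose (n - i)
    rw [h1, h2]
    have : ((n - i : ℕ) : ℤ) = (n : ℤ) - i := by push_cast [hin]; ring
    rw [this]
  rw [Finset.sum_congr rfl hinner]
  have expand : ∀ k ∈ range (i + 1),
      ((-1 : ℤ) ^ k * (i.choose k : ℤ)) *
          (((n : ℤ) - k) * 2 ^ (n - i) - ((n : ℤ) - i) * 2 ^ (n - i - 1))
      = ((n : ℤ) * 2 ^ (n - i) - ((n : ℤ) - i) * 2 ^ (n - i - 1)) * ((-1 : ℤ) ^ k * (i.choose k : ℤ))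
        - 2 ^ (n - i) * ((-1 : ℤ) ^ k * (k : ℤ) * (i.choose k : ℤ)) := by
    intro k _; ring
  rw [Finset.sum_congr rfl expand, Finset.sum_sub_distrib, ← Finset.mul_sum, ← Finset.mul_sum]
  have hA := alt_sum_choose i (by omega)
  have hB := alt_sum_mul_choose i hi2
  rw [hA, hB, mul_zero, mul_zero, sub_zero]

/-- For d = 2, the vector c_j = (n-j)/n is feasible for the dual of the (n,2)
Delsarte LP: c_j ≥ 0, c_0 = 1, Σ_j c_j K_j(i;n) = 0 for all 2 ≤ i ≤ n; and its
objective value Σ_j c_j C(n,j) equals 2^{n-1}. -/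
theorem d_eq_two_dual_feasible (n : ℕ) (hn : 1 ≤ n) :
    (∀ j : ℕ, j ≤ n → 0 ≤ ((n : ℚ) - j) / n) ∧
    ((n : ℚ) - 0) / n = 1 ∧
    (∀ i : ℕ, 2 ≤ i → i ≤ n →
      ∑ j ∈ Finset.range (n + 1), ((n : ℚ) - j) / n * (kraw n j i : ℚ) = 0) ∧
    ∑ j ∈ Finset.range (n + 1), ((n : ℚ) - j) / n * (n.choose j : ℚ) =
      2 ^ (n - 1) := by
  have hn0 : (n : ℚ) ≠ 0 := by positivity
  refine ⟨?_, ?_, ?_, ?_⟩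
  · intro j hj
    apply div_nonneg _ (by positivity)
    have : (j : ℚ) ≤ n := by exact_mod_cast hj
    linarith
  · rw [sub_zero, div_self hn0]
  · intro i hi2 hin
    have hk := key n i hi2 hin
    have : ∑ j ∈ Finset.range (n + 1), ((n : ℚ) - j) / n * (kraw n j i : ℚ)
        = ((∑ j ∈ range (n + 1), ((n : ℤ) - j) * kraw n j i : ℤ) : ℚ) / n := by
      push_cast
      rw [Finset.sum_div]
      exact Finset.sum_congr rfl fun j _ => by ring
    rw [this, hk]
    simp
  · have h1 : ∑ j ∈ range (n + 1), ((n : ℚ)) * (n.choose j : ℚ) = n * 2 ^ n := by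
      rw [← Finset.mul_sum]
      congr 1
      exact_mod_cast Nat.sum_range_choose n
    have h2 : ∑ j ∈ range (n + 1), (j : ℚ) * (n.choose j : ℚ) = n * 2 ^ (n - 1) := by
      exact_mod_cast sum_mul_choose n
    have hsplit : ∑ j ∈ Finset.range (n + 1), ((n : ℚ) - j) / n * (n.choose j : ℚ)
        = (∑ j ∈ range (n + 1), ((n : ℚ)) * (n.choose j : ℚ)
            - ∑ j ∈ range (n + 1), (j : ℚ) * (n.choose j : ℚ)) / n := by
      rw [← Finset.sum_sub_distrib, Finset.sum_div]
      apply Finset.sum_congr rfl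
      intro j _
      ring
    rw [hsplit, h1, h2]
    have h2n : (2 : ℚ) ^ n = 2 * 2 ^ (n - 1) := by
      conv_lhs => rw [show n = (n - 1) + 1 by omega]
      rw [pow_succ]; ring
    rw [h2n]
    field_simp
    ring
end

section
/- Let n ≥ 1 and suppose b = (b_0,...,b_n) ∈ ℝ^{n+1} is symmetric, i.e., b_j = b_{n−j} for all 0 ≤ j ≤ n. Then for every even i with 0 ≤ i ≤ n−1, Σ_{j=0}^{n} b_j K_j(i;n) = 2 Σ_{j=0}^{n−1} b_j K_j(i;n−1), and for every odd i with 1 ≤ i ≤ n−1, 2 Σ_{j=0}^{n−1} b_j K_j(i;n−1) = Σ_{j=0}^{n} b_j K_j(i+1;n). Moreover, for every odd i with 1 ≤ i ≤ n, Σ_{j=0}^{n} b_j K_j(i;n) = 0. -/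
open Finset

lemma intChoose_eq (a b : ℤ) (ha : 0 ≤ a) (hb : 0 ≤ b) :
    intChoose a b = (a.toNat.choose b.toNat : ℤ) := by
  simp [intChoose, ha, hb]

lemma intChoose_of_lt (a b : ℤ) (ha : 0 ≤ a) (h : a < b) : intChoose a b = 0 := by
  rw [intChoose_eq a b ha (by omega), Nat.choose_eq_zero_of_lt (by omega)]
  simp

lemma intChoose_nat (i k : ℕ) : intChoose i k = (i.choose k : ℤ) := by
  simp [intChoose]

lemma intChoose_pascal (a b : ℤ) (ha : 1 ≤ a) :
    intChoose a b = intChoose (a-1) b + intChoose (a-1) (b-1) := by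
  rcases lt_trichotomy b 0 with hb | hb | hb
  · rw [intChoose_neg _ _ hb, intChoose_neg _ _ hb, intChoose_neg _ _ (by omega)]
    ring
  · subst hb
    rw [intChoose_eq _ _ (by omega) le_rfl, intChoose_eq _ _ (by omega) le_rfl,
      intChoose_neg (a-1) _ (by norm_num)]
    simp
  · rw [intChoose_eq _ _ (by omega) (by omega), intChoose_eq _ _ (by omega) (by omega),
      intChoose_eq _ _ (by omega) (by omega)]
    have ha' : a.toNat = (a-1).toNat + 1 := by omega
    have hb' : b.toNat = (b-1).toNat + 1 := by omega
    rw [ha', hb', Nat.choose_succ_succ']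
    push_cast; ring

lemma intChoose_symm (a b : ℤ) (ha : 0 ≤ a) : intChoose a b = intChoose a (a - b) := by
  rcases lt_trichotomy b 0 with hb | hb | hb
  · rw [intChoose_neg _ _ hb, intChoose_of_lt _ _ ha (by omega)]
  · subst hb
    rw [intChoose_eq _ _ ha le_rfl, sub_zero, intChoose_eq _ _ ha ha]
    simp
  · rcases le_or_gt b a with hba | hba
    · rw [intChoose_eq _ _ ha (by omega), intChoose_eq _ _ ha (by omega)]
      have : (a - b).toNat = a.toNat - b.toNat := by omega
      rw [this, Nat.choose_symm (by omega)]
    · rw [intChoose_of_lt _ _ ha hba, intChoose_neg _ _ (by omega)]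

/-- Fixed-range form of the Krawtchouk sum. -/
def F (m : ℕ) (j : ℤ) (i : ℕ) : ℤ :=
  ∑ k ∈ Finset.range (i + 1), (-1) ^ k * (i.choose k : ℤ) * intChoose ((m : ℤ) - i) (j - k)

lemma kraw_eq_F (m : ℕ) (j : ℤ) (i : ℕ) : kraw m j i = F m j i := by
  have key : ∀ N : ℕ, j.toNat ≤ N → i ≤ N →
      (∑ k ∈ Finset.range (N + 1), (-1) ^ k * (i.choose k : ℤ) * intChoose ((m : ℤ) - i) (j - k))
        = F m j i ∧
      kraw m j i
        = ∑ k ∈ Finset.range (N + 1), (-1) ^ k * (i.choose k : ℤ) * intChoose ((m : ℤ) - i) (j - k) := by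
    intro N hjN hiN
    constructor
    · rw [eq_comm]
      apply Finset.sum_subset
      · intro x hx; simp only [Finset.mem_range] at *; omega
      · intro x _ hx
        simp only [Finset.mem_range, not_lt] at hx
        rw [Nat.choose_eq_zero_of_lt (by omega)]
        simp
    · unfold kraw
      have hterm : ∀ k : ℕ, (-1:ℤ) ^ k * intChoose i k * intChoose ((m : ℤ) - i) (j - k)
          = (-1) ^ k * (i.choose k : ℤ) * intChoose ((m : ℤ) - i) (j - k) := by
        intro k; rw [intChoose_nat]
      simp only [hterm]
      apply Finset.sum_subset
      · intro x hx; simp only [Finset.mem_range] at *; omega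
      · intro x _ hx
        simp only [Finset.mem_range, not_lt] at hx
        have : j - x < 0 := by
          have := Int.self_le_toNat j
          omega
        rw [intChoose_neg _ _ this]
        ring
  obtain ⟨h1, h2⟩ := key (max j.toNat i) (le_max_left _ _) (le_max_right _ _)
  rw [h2, h1]

lemma F_neg (m : ℕ) (j : ℤ) (i : ℕ) (hj : j < 0) : F m j i = 0 := by
  apply Finset.sum_eq_zero
  intro k _
  rw [intChoose_neg _ _ (by omega)]
  ring

lemma F_vanish (m : ℕ) (j : ℤ) (i : ℕ) (hi : i ≤ m) (hj : (m : ℤ) < j) : F m j i = 0 := by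
  apply Finset.sum_eq_zero
  intro k hk
  simp only [Finset.mem_range] at hk
  rw [intChoose_of_lt _ _ (by omega) (by omega)]
  ring

lemma F_pascal (m : ℕ) (j : ℤ) (i : ℕ) (hi : i ≤ m) :
    F (m + 1) j i = F m j i + F m (j - 1) i := by
  unfold F
  rw [← Finset.sum_add_distrib]
  apply Finset.sum_congr rfl
  intro k _
  have h : ((m : ℤ) + 1) - i = ((m : ℤ) - i) + 1 := by ring
  have := intChoose_pascal (((m : ℤ) + 1) - i) (j - k) (by omega)
  push_cast
  rw [this]
  ring_nf

lemma F_shift (m : ℕ) (j : ℤ) (i : ℕ) (hi : i ≤ m) :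
    F (m + 1) j (i + 1) = F m j i - F m (j - 1) i := by
  have hcast : ((m : ℤ) + 1) - ((i : ℤ) + 1) = (m : ℤ) - i := by ring
  set g : ℤ → ℤ := fun t => intChoose ((m : ℤ) - i) t with hg
  have hF1 : F (m + 1) j (i + 1)
      = ∑ k ∈ Finset.range (i + 2), (-1) ^ k * ((i+1).choose k : ℤ) * g (j - k) := by
    unfold F
    apply Finset.sum_congr rfl
    intro k _
    push_cast
    rw [hcast]
  have hext : ∑ k ∈ Finset.range (i + 2), (-1:ℤ) ^ k * (i.choose k : ℤ) * g (j - k)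
      = F m j i := by
    unfold F
    rw [show i + 2 = (i+1)+1 from rfl, Finset.sum_range_succ]
    rw [show (i.choose (i+1) : ℤ) = 0 by rw [Nat.choose_eq_zero_of_lt (by omega)]; simp]
    ring
  rw [hF1, Finset.sum_range_succ']
  push_cast
  have hsplit : ∀ x ∈ Finset.range (i + 1),
      (-1:ℤ) ^ (x+1) * ((i+1).choose (x+1) : ℤ) * g (j - ((x:ℤ)+1))
        = -((-1) ^ x * (i.choose x : ℤ) * g ((j-1) - x))
          + (-1) ^ (x+1) * (i.choose (x+1) : ℤ) * g (j - ((x:ℤ)+1)) := by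
    intro x _
    rw [Nat.choose_succ_succ]
    rw [show j - ((x:ℤ)+1) = (j - 1) - x by ring]
    push_cast
    ring
  rw [Finset.sum_congr rfl hsplit, Finset.sum_add_distrib]
  have hS1 : (∑ x ∈ Finset.range (i+1), -((-1:ℤ) ^ x * (i.choose x : ℤ) * g ((j-1) - x)))
      = -F m (j-1) i := by
    rw [Finset.sum_neg_distrib]
    rfl
  have hS2 : (∑ x ∈ Finset.range (i+1), (-1:ℤ) ^ (x+1) * (i.choose (x+1) : ℤ) * g (j - ((x:ℤ)+1)))
      + (-1:ℤ)^0 * (i.choose 0 : ℤ) * g (j - ((0:ℕ):ℤ)) = F m j i := by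
    rw [← hext, Finset.sum_range_succ' _ (i+1)]
    push_cast
    ring
  simp only [Nat.choose_zero_right, Nat.cast_one, one_mul, sub_zero, pow_zero,
    Nat.cast_zero] at hS2 ⊢
  linarith [hS1, hS2]

lemma F_reflect (m : ℕ) (j : ℤ) (i : ℕ) (hi : i ≤ m) :
    F m ((m : ℤ) - j) i = (-1) ^ i * F m j i := by
  unfold F
  rw [← Finset.sum_range_reflect, Finset.mul_sum]
  apply Finset.sum_congr rfl
  intro k hk
  simp only [Finset.mem_range] at hk
  have hki : k ≤ i := by omega
  have h1 : i + 1 - 1 - k = i - k := by omega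
  rw [h1, Nat.choose_symm hki]
  have hcast : ((i - k : ℕ) : ℤ) = (i : ℤ) - k := by omega
  rw [hcast]
  have hsign : (-1:ℤ) ^ (i - k) * (-1) ^ k = (-1) ^ i := by
    rw [← pow_add, Nat.sub_add_cancel hki]
  have harg : intChoose ((m:ℤ) - i) ((m : ℤ) - j - ((i:ℤ) - k))
      = intChoose ((m:ℤ) - i) (j - k) := by
    rw [intChoose_symm ((m:ℤ) - i) ((m:ℤ) - j - ((i:ℤ) - k)) (by omega)]
    congr 1
    ring
  rw [harg]
  have : (-1:ℤ) ^ (i - k) = (-1) ^ i * (-1) ^ k := by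
    have h2 : ((-1:ℤ)^k) * ((-1:ℤ)^k) = 1 := by
      rw [← pow_add]
      simp [pow_add, ← two_mul, pow_mul]
    calc (-1:ℤ) ^ (i-k) = (-1:ℤ)^(i-k) * ((-1:ℤ)^k * (-1:ℤ)^k) := by rw [h2]; ring
      _ = ((-1:ℤ)^(i-k) * (-1:ℤ)^k) * (-1:ℤ)^k := by ring
      _ = (-1) ^ i * (-1) ^ k := by rw [hsign]
  rw [this]
  ring

lemma sumA (m i : ℕ) (hi : i ≤ m) (b : ℕ → ℝ) :
    ∑ j ∈ Finset.range (m + 2), b j * ((kraw m j i : ℤ) : ℝ)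
      = ∑ j ∈ Finset.range (m + 1), b j * ((kraw m j i : ℤ) : ℝ) := by
  rw [Finset.sum_range_succ]
  have h : kraw m ((m + 1 : ℕ) : ℤ) i = 0 := by
    rw [kraw_eq_F]
    exact F_vanish _ _ _ hi (by push_cast; omega)
  rw [h]
  simp

lemma sumB (m i : ℕ) (hi : i ≤ m) (b : ℕ → ℝ)
    (hsym : ∀ j : ℕ, j ≤ m + 1 → b j = b (m + 1 - j)) :
    ∑ j ∈ Finset.range (m + 2), b j * ((kraw m ((j : ℤ) - 1) i : ℤ) : ℝ)
      = (-1 : ℝ) ^ i * ∑ j ∈ Finset.range (m + 1), b j * ((kraw m j i : ℤ) : ℝ) := by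
  rw [Finset.sum_range_succ' _ (m + 1)]
  have h0 : kraw m (((0:ℕ) : ℤ) - 1) i = 0 := by
    rw [kraw_eq_F]
    exact F_neg _ _ _ (by norm_num)
  rw [h0]
  have hstep : ∀ j ∈ Finset.range (m + 1),
      b (j + 1) * ((kraw m (((j + 1 : ℕ) : ℤ) - 1) i : ℤ) : ℝ)
        = b (j + 1) * ((kraw m j i : ℤ) : ℝ) := by
    intro j _
    have : ((j + 1 : ℕ) : ℤ) - 1 = (j : ℤ) := by push_cast; ring
    rw [this]
  rw [Finset.sum_congr rfl hstep]
  conv_lhs => rw [← Finset.sum_range_reflect]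
  rw [Finset.mul_sum]
  simp only [Int.cast_zero, mul_zero, add_zero]
  apply Finset.sum_congr rfl
  intro j hj
  simp only [Finset.mem_range] at hj
  have hj' : j ≤ m := by omega
  have h1 : m + 1 - 1 - j = m - j := by omega
  rw [h1]
  have hb : b (m - j + 1) = b j := by
    have h2 : m - j + 1 = m + 1 - j := by omega
    rw [h2, ← hsym j (by omega)]
  have hk : kraw m ((m - j : ℕ) : ℤ) i = (-1) ^ i * kraw m (j : ℤ) i := by
    rw [show ((m - j : ℕ) : ℤ) = (m : ℤ) - j by omega, kraw_eq_F, kraw_eq_F]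
    exact F_reflect m j i hi
  rw [hb, hk]
  push_cast
  ring

/-- Let n ≥ 1 and b ∈ ℝ^{n+1} be symmetric (b_j = b_{n-j}). Then for every even
i ≤ n-1, Σ_{j=0}^n b_j K_j(i;n) = 2 Σ_{j=0}^{n-1} b_j K_j(i;n-1); for every odd
i ≤ n-1, 2 Σ_{j=0}^{n-1} b_j K_j(i;n-1) = Σ_{j=0}^n b_j K_j(i+1;n); and for every
odd i ≤ n, Σ_{j=0}^n b_j K_j(i;n) = 0. -/
theorem symmetric_decomposition_identities (n : ℕ) (hn : 1 ≤ n) (b : ℕ → ℝ)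
    (hsym : ∀ j : ℕ, j ≤ n → b j = b (n - j)) :
    (∀ i : ℕ, i ≤ n - 1 → Even i →
      ∑ j ∈ Finset.range (n + 1), b j * (kraw n j i : ℝ) =
        2 * ∑ j ∈ Finset.range n, b j * (kraw (n - 1) j i : ℝ)) ∧
    (∀ i : ℕ, 1 ≤ i → i ≤ n - 1 → Odd i →
      2 * ∑ j ∈ Finset.range n, b j * (kraw (n - 1) j i : ℝ) =
        ∑ j ∈ Finset.range (n + 1), b j * (kraw n j ((i : ℤ) + 1) : ℝ)) ∧
    (∀ i : ℕ, 1 ≤ i → i ≤ n → Odd i →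
      ∑ j ∈ Finset.range (n + 1), b j * (kraw n j i : ℝ) = 0) := by
  obtain ⟨m, rfl⟩ : ∃ m, n = m + 1 := ⟨n - 1, by omega⟩
  have hm1 : m + 1 - 1 = m := by omega
  rw [hm1]
  refine ⟨?_, ?_, ?_⟩
  · intro i hi hev
    have hi' : i ≤ m := by omega
    have hstep : ∀ j ∈ Finset.range (m + 2),
        b j * ((kraw (m + 1) j i : ℤ) : ℝ)
          = b j * ((kraw m j i : ℤ) : ℝ) + b j * ((kraw m ((j : ℤ) - 1) i : ℤ) : ℝ) := by
      intro j _
      have h : kraw (m + 1) (j : ℤ) i = kraw m (j : ℤ) i + kraw m ((j : ℤ) - 1) i := by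
        rw [kraw_eq_F, kraw_eq_F, kraw_eq_F]
        exact F_pascal m j i hi'
      rw [h]
      push_cast
      ring
    rw [show m + 1 + 1 = m + 2 from rfl, Finset.sum_congr rfl hstep, Finset.sum_add_distrib,
      sumA m i hi' b, sumB m i hi' b hsym, Even.neg_one_pow hev]
    ring
  · intro i h1 hi hodd
    have hi' : i ≤ m := by omega
    have hstep : ∀ j ∈ Finset.range (m + 2),
        b j * ((kraw (m + 1) j ((i : ℤ) + 1) : ℤ) : ℝ)
          = b j * ((kraw m j i : ℤ) : ℝ) - b j * ((kraw m ((j : ℤ) - 1) i : ℤ) : ℝ) := by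
      intro j _
      have h : kraw (m + 1) (j : ℤ) ((i : ℤ) + 1) = kraw m (j : ℤ) i - kraw m ((j : ℤ) - 1) i := by
        have hc : ((i : ℤ) + 1) = ((i + 1 : ℕ) : ℤ) := by push_cast; ring
        rw [hc, kraw_eq_F, kraw_eq_F, kraw_eq_F]
        exact F_shift m j i hi'
      rw [h]
      push_cast
      ring
    rw [show m + 1 + 1 = m + 2 from rfl, Finset.sum_congr rfl hstep, Finset.sum_sub_distrib,
      sumA m i hi' b, sumB m i hi' b hsym, Odd.neg_one_pow hodd]
    ring
  · intro i h1 hi hodd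
    have key : ∑ j ∈ Finset.range (m + 1 + 1), b j * ((kraw (m + 1) j i : ℤ) : ℝ)
        = (-1 : ℝ) ^ i * ∑ j ∈ Finset.range (m + 1 + 1), b j * ((kraw (m + 1) j i : ℤ) : ℝ) := by
      conv_lhs => rw [← Finset.sum_range_reflect]
      rw [Finset.mul_sum]
      apply Finset.sum_congr rfl
      intro j hj
      simp only [Finset.mem_range] at hj
      have hj' : j ≤ m + 1 := by omega
      have h2 : m + 1 + 1 - 1 - j = m + 1 - j := by omega
      rw [h2]
      have hb : b (m + 1 - j) = b j := (hsym j (by omega)).symm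
      have hk : kraw (m + 1) ((m + 1 - j : ℕ) : ℤ) i = (-1) ^ i * kraw (m + 1) (j : ℤ) i := by
        rw [show ((m + 1 - j : ℕ) : ℤ) = ((m + 1 : ℕ) : ℤ) - j by omega, kraw_eq_F, kraw_eq_F]
        exact F_reflect (m + 1) j i hi
      rw [hb, hk]
      push_cast
      ring
    rw [Odd.neg_one_pow hodd] at key
    linarith
end
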